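/- arXiv:2102.13630 — 4 statements merged into one kernel-verified Lean document; each statement's English description precedes it below -/
import Mathlib

section
/- Let s, α be real numbers with s ≠ 0 and cos α ≠ 0. Then the eigenvalues of the PT-symmetric Hamiltonian H = s • !![Complex.I * Real.sin α, 1; 1, -Complex.I * Real.sin α] are exactly s·cos α and −s·cos α; in particular both eigenvalues of H are real (symmetry-unbroken phase). -/
open Matrix Complex

noncomputable section

/-- The PT-symmetric Hamiltonian `H = s • !![i sin α, 1; 1, -i sin α]`. -/
def Hpt (s α : ℝ) : Matrix (Fin 2) (Fin 2) ℂ :=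
  (s : ℂ) • !![Complex.I * Real.sin α, 1; 1, -Complex.I * Real.sin α]

/-- In the symmetry-unbroken phase (`cos α ≠ 0`), the eigenvalues of the PT-symmetric
Hamiltonian are exactly `s cos α` and `-s cos α`; in particular they are all real. -/
theorem stmt0 (s α : ℝ) (hs : s ≠ 0) (hc : Real.cos α ≠ 0) :
    spectrum ℂ (Hpt s α) =
      {((s * Real.cos α : ℝ) : ℂ), ((-(s * Real.cos α) : ℝ) : ℂ)} ∧
    ∀ z ∈ spectrum ℂ (Hpt s α), z.im = 0 := by
  have key : ∀ z : ℂ, z ∈ spectrum ℂ (Hpt s α) ↔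
      (z = ((s * Real.cos α : ℝ) : ℂ) ∨ z = ((-(s * Real.cos α) : ℝ) : ℂ)) := by
    intro z
    rw [spectrum.mem_iff, Matrix.isUnit_iff_isUnit_det, isUnit_iff_ne_zero, not_not]
    have hdet : (algebraMap ℂ (Matrix (Fin 2) (Fin 2) ℂ) z - Hpt s α).det
        = (z - ((s * Real.cos α : ℝ) : ℂ)) * (z + ((s * Real.cos α : ℝ) : ℂ)) := by
      simp [Hpt, Matrix.det_fin_two, Matrix.algebraMap_matrix_apply]
      ring_nf
      rw [Complex.I_sq]
      linear_combination (s:ℂ)^2 * (Complex.sin_sq_add_cos_sq (α:ℂ))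
    rw [hdet]
    constructor
    · intro h
      rcases mul_eq_zero.1 h with h | h
      · left; linear_combination h
      · right; rw [Complex.ofReal_neg]; linear_combination h
    · rintro (h | h) <;> subst h
      · ring
      · rw [Complex.ofReal_neg]; ring
  refine ⟨?_, ?_⟩
  · ext z
    simp [key z, Set.mem_insert_iff]
  · intro z hz
    rcases (key z).1 hz with h | h <;> simp [h]
end
end

section
/- Let s, α, t be real numbers with cos α ≠ 0, and let H = s • !![Complex.I * Real.sin α, 1; 1, -Complex.I * Real.sin α]. Then the matrix exponential of the evolution satisfies exp(−Complex.I · t • H) = (1/cos α) • !![cos(s·t·cos α − α), −Complex.I·sin(s·t·cos α); −Complex.I·sin(s·t·cos α), cos(s·t·cos α + α)]. -/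
/-!
The generator `K = !![i sin α, 1; 1, -i sin α]` of `H = s • K` squares to `cos² α • 1`, so
`J = K / cos α` is an involution. Splitting the exponential series into even and odd powers gives
`exp (z • J) = cosh z • 1 + sinh z • J`; for `z = -i θ` with `θ = s t cos α` this is
`cos θ • 1 - i sin θ • J`, whose diagonal entries are `cos θ ± sin θ tan α = cos (θ ∓ α) / cos α`.
-/

open Matrix Complex

noncomputable section

open NormedSpace

section Involution

variable {𝔸 : Type*} [Ring 𝔸] [Algebra ℂ 𝔸] [TopologicalSpace 𝔸] [IsTopologicalRing 𝔸]
  [ContinuousSMul ℂ 𝔸] [T2Space 𝔸]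

theorem exp_smul_of_mul_self_eq_one {J : 𝔸} (hJ : J * J = 1) (z : ℂ) :
    exp (z • J) = cosh z • (1 : 𝔸) + sinh z • J := by
  have hJ_even (n : ℕ) : J ^ (2 * n) = 1 := by rw [pow_mul, sq, hJ, one_pow]
  rw [exp_eq_tsum ℂ]
  refine (HasSum.even_add_odd ?_ ?_).tsum_eq
  · convert (hasSum_cosh z).smul_const (1 : 𝔸) using 2 with n
    rw [smul_pow, hJ_even, smul_smul, div_eq_inv_mul]
  · convert (hasSum_sinh z).smul_const J using 2 with n
    rw [smul_pow, pow_succ J, hJ_even, one_mul, smul_smul, div_eq_inv_mul]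

theorem exp_smul_of_mul_self_eq_sq_smul_one {K : 𝔸} {c : ℂ} (hc : c ≠ 0)
    (hK : K * K = c ^ 2 • 1) (z : ℂ) :
    exp (z • K) = cosh (z * c) • (1 : 𝔸) + (sinh (z * c) / c) • K := by
  have hJ : (c⁻¹ • K) * (c⁻¹ • K) = 1 := by
    rw [smul_mul_smul_comm, hK, smul_smul, ← sq, inv_pow, inv_mul_cancel₀ (pow_ne_zero 2 hc),
      one_smul]
  have hzK : z • K = (z * c) • (c⁻¹ • K) := by
    rw [smul_smul, mul_assoc, mul_inv_cancel₀ hc, mul_one]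
  rw [hzK, exp_smul_of_mul_self_eq_one hJ, smul_smul, div_eq_mul_inv]

end Involution

theorem Matrix.fin_two_traceless_mul_self {R : Type*} [CommRing R] (a b c : R) :
    !![a, b; c, -a] * !![a, b; c, -a] = (a ^ 2 + b * c) • (1 : Matrix (Fin 2) (Fin 2) R) := by
  ext i j
  fin_cases i <;> fin_cases j <;> simp [Matrix.mul_apply, Fin.sum_univ_two] <;> ring

/-- Closed form of the (non-unitary) time evolution operator generated by
the PT-symmetric Hamiltonian in the symmetry-unbroken phase:
`exp (-i t H) = (1/cos α) • !![cos(s t cos α - α), -i sin(s t cos α);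
-i sin(s t cos α), cos(s t cos α + α)]`. -/
theorem stmt2 (s α t : ℝ) (hc : Real.cos α ≠ 0) :
    NormedSpace.exp ((-(Complex.I * (t : ℂ))) • Hpt s α) =
      ((Real.cos α : ℂ))⁻¹ •
        !![(Real.cos (s * t * Real.cos α - α) : ℂ),
            -Complex.I * Real.sin (s * t * Real.cos α);
           -Complex.I * Real.sin (s * t * Real.cos α),
            (Real.cos (s * t * Real.cos α + α) : ℂ)] := by
  set θ := s * t * Real.cos α
  have hK : !![I * Real.sin α, 1; 1, -I * Real.sin α] * !![I * Real.sin α, 1; 1, -I * Real.sin α]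
      = (Real.cos α : ℂ) ^ 2 • (1 : Matrix (Fin 2) (Fin 2) ℂ) := by
    rw [neg_mul, Matrix.fin_two_traceless_mul_self, mul_one]
    congr 1
    push_cast
    linear_combination Complex.sin α ^ 2 * I_sq - Complex.sin_sq_add_cos_sq α
  have hθ : -(I * t) * s * Real.cos α = -(θ * I) := by push_cast [θ]; ring
  rw [Hpt, smul_smul, exp_smul_of_mul_self_eq_sq_smul_one (by exact_mod_cast hc) hK, hθ,
    cosh_neg, cosh_mul_I, sinh_neg, sinh_mul_I]
  have hcα : Complex.cos α ≠ 0 := by rw [← ofReal_cos]; exact_mod_cast hc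
  ext i j
  fin_cases i <;> fin_cases j <;> simp [Complex.cos_sub, Complex.cos_add] <;> field_simp <;>
    rw [I_sq] <;> ring
end
end

section
/- Let s, α be real numbers with s ≠ 0 and cos α ≠ 0, let H = s • !![Complex.I * Real.sin α, 1; 1, -Complex.I * Real.sin α], and set t = π/(2·s·cos α). Then (cos α) • exp(−Complex.I · t • H) = !![Real.sin α, -Complex.I; -Complex.I, -Real.sin α], i.e. up to the positive scalar 1/cos α the time-evolution operator at this time equals the simulated PT evolution operator U_α. -/
open Matrix Complex
open scoped Nat

noncomputable section

/-! `Hpt s α` squares to `(s cos α)² • 1`, so `N := (s cos α)⁻¹ • Hpt s α` is an involution and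
`exp (z • N) = cosh z • 1 + sinh z • N` by splitting the exponential series into even and odd
terms. The time `t` makes `-i t • Hpt s α = (-(π / 2) i) • N`, where `cosh` vanishes and `sinh`
is `-i`; hence `exp (-i t • Hpt s α) = -i • N`. -/

theorem NormedSpace.exp_smul_of_mul_self_eq_one {𝔸 : Type*} [Ring 𝔸] [Algebra ℂ 𝔸]
    [TopologicalSpace 𝔸] [IsTopologicalRing 𝔸] [ContinuousSMul ℂ 𝔸] [T2Space 𝔸]
    {N : 𝔸} (hN : N * N = 1) (z : ℂ) :
    NormedSpace.exp (z • N) = Complex.cosh z • 1 + Complex.sinh z • N := by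
  have hpow : ∀ n, N ^ (2 * n) = 1 := fun n => by rw [pow_mul, sq, hN, one_pow]
  have hseries : HasSum (fun n : ℕ => ((n ! : ℂ)⁻¹) • (z • N) ^ n)
      (Complex.cosh z • 1 + Complex.sinh z • N) := by
    refine HasSum.even_add_odd ?_ ?_
    · convert (Complex.hasSum_cosh z).smul_const (1 : 𝔸) using 2 with n
      rw [smul_pow, hpow, smul_smul, div_eq_inv_mul]
    · convert (Complex.hasSum_sinh z).smul_const N using 2 with n
      rw [smul_pow, pow_succ N, hpow, one_mul, smul_smul, div_eq_inv_mul]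
  rw [NormedSpace.exp_eq_tsum ℂ]
  exact hseries.tsum_eq

theorem Hpt_mul_self (s α : ℝ) : Hpt s α * Hpt s α = ((s * Real.cos α : ℂ) ^ 2) • 1 := by
  ext i j
  fin_cases i <;> fin_cases j <;> simp [Hpt, Matrix.mul_apply, Fin.sum_univ_two] <;>
    first
      | ring1
      | linear_combination (s : ℂ) ^ 2 * (sin (α : ℂ) ^ 2 * I_sq - sin_sq_add_cos_sq (α : ℂ))

/-- At time `t = π / (2 s cos α)`, up to the positive scalar `1 / cos α`, the
time-evolution operator generated by the PT-symmetric Hamiltonian equals the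
simulated PT evolution operator `U_α = !![sin α, -i; -i, -sin α]`. -/
theorem stmt3 (s α : ℝ) (hs : s ≠ 0) (hc : Real.cos α ≠ 0)
    (t : ℝ) (ht : t = Real.pi / (2 * s * Real.cos α)) :
    (Real.cos α : ℂ) • NormedSpace.exp ((-(Complex.I * (t : ℂ))) • Hpt s α) =
      !![(Real.sin α : ℂ), -Complex.I; -Complex.I, -(Real.sin α : ℂ)] := by
  set μ : ℂ := s * Real.cos α
  have hμ : μ ≠ 0 := mul_ne_zero (ofReal_ne_zero.mpr hs) (ofReal_ne_zero.mpr hc)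
  have hN : (μ⁻¹ • Hpt s α) * (μ⁻¹ • Hpt s α) = 1 := by
    rw [smul_mul_smul, Hpt_mul_self, smul_smul, ← sq, ← mul_pow, inv_mul_cancel₀ hμ, one_pow,
      one_smul]
  have htime : (-(I * t)) • Hpt s α = (-((Real.pi / 2 : ℝ) : ℂ) * I) • (μ⁻¹ • Hpt s α) := by
    rw [smul_smul]
    congr 1
    simp only [μ, ht]
    push_cast
    field_simp
  rw [htime, NormedSpace.exp_smul_of_mul_self_eq_one hN, cosh_mul_I, sinh_mul_I, cos_neg, sin_neg,
    ← ofReal_cos, ← ofReal_sin, Real.cos_pi_div_two, Real.sin_pi_div_two, ofReal_zero, ofReal_one,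
    zero_smul, zero_add, Hpt, smul_smul, smul_smul, smul_smul]
  have hscalar : (Real.cos α : ℂ) * (-1 * I) * μ⁻¹ * s = -I := by
    calc (Real.cos α : ℂ) * (-1 * I) * μ⁻¹ * s = -I * (μ * μ⁻¹) := by ring
      _ = -I := by rw [mul_inv_cancel₀ hμ, mul_one]
  rw [hscalar]
  ext i j
  fin_cases i <;> fin_cases j <;> simp [← mul_assoc]
end
end

section
/- For the shared pure state ρ_{β,γ} (β, γ : ℝ with β² + γ² ≠ 0), the post-selected outcome probabilities for Bob's σy measurement satisfy P₊(Π_y) − P₋(Π_y) = 8·β·γ·sin α / ((β² + γ²)·(−3 + cos(2α))), provided Re(trace ρ₊) ≠ 0 and Re(trace ρ₋) ≠ 0. In particular the difference vanishes exactly when β·γ·sin α = 0. -/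
open Matrix Kronecker Complex
open scoped ComplexOrder

noncomputable section

/-- Pauli matrix `σx`. -/
def σx : Matrix (Fin 2) (Fin 2) ℂ := !![0, 1; 1, 0]

/-- Pauli matrix `σy`. -/
def σy : Matrix (Fin 2) (Fin 2) ℂ := !![0, -Complex.I; Complex.I, 0]

/-- Pauli matrix `σz`. -/
def σz : Matrix (Fin 2) (Fin 2) ℂ := !![1, 0; 0, -1]

/-- The simulated PT-symmetric evolution operator at the chosen time. -/
def Upt (α : ℝ) : Matrix (Fin 2) (Fin 2) ℂ :=
  !![(Real.sin α : ℂ), -Complex.I; -Complex.I, -(Real.sin α : ℂ)]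

/-- Alice's operation `A₊` (do nothing). -/
def Apos : Matrix (Fin 2) (Fin 2) ℂ := 1

/-- Alice's operation `A₋` (bit flip `σx`). -/
def Aneg : Matrix (Fin 2) (Fin 2) ℂ := σx

/-- Unnormalized post-selected state after Alice applies `A₊` followed by the
simulated PT evolution. -/
def postPlus (α : ℝ) (ρ : Matrix (Fin 2 × Fin 2) (Fin 2 × Fin 2) ℂ) :
    Matrix (Fin 2 × Fin 2) (Fin 2 × Fin 2) ℂ :=
  ((Upt α * Apos) ⊗ₖ (1 : Matrix (Fin 2) (Fin 2) ℂ)) * ρ *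
    ((Upt α * Apos) ⊗ₖ (1 : Matrix (Fin 2) (Fin 2) ℂ))ᴴ

/-- Unnormalized post-selected state after Alice applies `A₋` followed by the
simulated PT evolution. -/
def postMinus (α : ℝ) (ρ : Matrix (Fin 2 × Fin 2) (Fin 2 × Fin 2) ℂ) :
    Matrix (Fin 2 × Fin 2) (Fin 2 × Fin 2) ℂ :=
  ((Upt α * Aneg) ⊗ₖ (1 : Matrix (Fin 2) (Fin 2) ℂ)) * ρ *
    ((Upt α * Aneg) ⊗ₖ (1 : Matrix (Fin 2) (Fin 2) ℂ))ᴴ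

/-- Probability that Bob obtains outcome `Π` given Alice applied `A₊`. -/
def Pplus (α : ℝ) (ρ : Matrix (Fin 2 × Fin 2) (Fin 2 × Fin 2) ℂ)
    (Pi : Matrix (Fin 2) (Fin 2) ℂ) : ℝ :=
  ((((1 : Matrix (Fin 2) (Fin 2) ℂ) ⊗ₖ Pi) * postPlus α ρ).trace).re /
    ((postPlus α ρ).trace).re

/-- Probability that Bob obtains outcome `Π` given Alice applied `A₋`. -/
def Pminus (α : ℝ) (ρ : Matrix (Fin 2 × Fin 2) (Fin 2 × Fin 2) ℂ)
    (Pi : Matrix (Fin 2) (Fin 2) ℂ) : ℝ :=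
  ((((1 : Matrix (Fin 2) (Fin 2) ℂ) ⊗ₖ Pi) * postMinus α ρ).trace).re /
    ((postMinus α ρ).trace).re

/-- Bob's `σy`-measurement projector onto `|+_y⟩ = (|0⟩ + i|1⟩)/√2`. -/
def Piy : Matrix (Fin 2) (Fin 2) ℂ :=
  (1/2 : ℂ) • !![1, -Complex.I; Complex.I, 1]

/-- Bob's rank-one projector `Π(z,u)` for an arbitrary projective measurement. -/
def Pizu (z u : ℝ) : Matrix (Fin 2) (Fin 2) ℂ :=
  !![((Real.cos (z/2))^2 : ℂ),
     (Real.cos (z/2) : ℂ) * (Real.sin (z/2) : ℂ) * Complex.exp (-(Complex.I * u));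
     (Real.cos (z/2) : ℂ) * (Real.sin (z/2) : ℂ) * Complex.exp (Complex.I * u),
     ((Real.sin (z/2))^2 : ℂ)]

/-- The single-qubit state `|+⟩ = (|0⟩ + |1⟩)/√2`. -/
def ketPlus : Fin 2 → ℂ := ![((1 / Real.sqrt 2 : ℝ) : ℂ), ((1 / Real.sqrt 2 : ℝ) : ℂ)]

/-- The single-qubit state `|−⟩ = (|0⟩ − |1⟩)/√2`. -/
def ketMinus : Fin 2 → ℂ := ![((1 / Real.sqrt 2 : ℝ) : ℂ), ((-(1 / Real.sqrt 2) : ℝ) : ℂ)]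

/-- The (normalized) pure state `|ψ_{β,γ}⟩ = (β|++⟩ + γ|−−⟩)/√(β²+γ²)`. -/
def ψpure (β γ : ℝ) : Fin 2 × Fin 2 → ℂ := fun q =>
  ((β : ℂ) * (ketPlus q.1 * ketPlus q.2) + (γ : ℂ) * (ketMinus q.1 * ketMinus q.2)) /
    ((Real.sqrt (β^2 + γ^2) : ℝ) : ℂ)

/-- The pure two-qubit density matrix `ρ_{β,γ} = |ψ_{β,γ}⟩⟨ψ_{β,γ}|`. -/
def ρpure (β γ : ℝ) : Matrix (Fin 2 × Fin 2) (Fin 2 × Fin 2) ℂ :=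
  Matrix.vecMulVec (ψpure β γ) (fun q => starRingEnd ℂ (ψpure β γ q))

/-- The maximally entangled state `|ψ⁺⟩ = (|00⟩ + |11⟩)/√2`. -/
def ψmax : Fin 2 × Fin 2 → ℂ := fun q =>
  if q.1 = q.2 then ((1 / Real.sqrt 2 : ℝ) : ℂ) else 0

/-- The two-qubit Werner state `ρ_W(p) = p |ψ⁺⟩⟨ψ⁺| + ((1-p)/4) 1`. -/
def ρWerner (p : ℝ) : Matrix (Fin 2 × Fin 2) (Fin 2 × Fin 2) ℂ :=
  (p : ℂ) • Matrix.vecMulVec ψmax (fun q => starRingEnd ℂ (ψmax q)) +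
    (((1 - p) / 4 : ℝ) : ℂ) • 1

/-- The canonical two-qubit state with magnetizations `mx my mz` (Alice),
`nx ny nz` (Bob) and diagonal correlators `Cxx Cyy Czz`. -/
def ρcan (mx my mz nx ny nz Cxx Cyy Czz : ℝ) :
    Matrix (Fin 2 × Fin 2) (Fin 2 × Fin 2) ℂ :=
  (1/4 : ℂ) • ((1 : Matrix (Fin 2 × Fin 2) (Fin 2 × Fin 2) ℂ)
    + (mx : ℂ) • (σx ⊗ₖ (1 : Matrix (Fin 2) (Fin 2) ℂ))
    + (my : ℂ) • (σy ⊗ₖ (1 : Matrix (Fin 2) (Fin 2) ℂ))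
    + (mz : ℂ) • (σz ⊗ₖ (1 : Matrix (Fin 2) (Fin 2) ℂ))
    + (nx : ℂ) • ((1 : Matrix (Fin 2) (Fin 2) ℂ) ⊗ₖ σx)
    + (ny : ℂ) • ((1 : Matrix (Fin 2) (Fin 2) ℂ) ⊗ₖ σy)
    + (nz : ℂ) • ((1 : Matrix (Fin 2) (Fin 2) ℂ) ⊗ₖ σz)
    + (Cxx : ℂ) • (σx ⊗ₖ σx)
    + (Cyy : ℂ) • (σy ⊗ₖ σy)
    + (Czz : ℂ) • (σz ⊗ₖ σz))

/-- Bob's reduced matrix: the partial trace over Alice's subsystem. -/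
def ptraceA (X : Matrix (Fin 2 × Fin 2) (Fin 2 × Fin 2) ℂ) :
    Matrix (Fin 2) (Fin 2) ℂ :=
  Matrix.of fun i j => ∑ k : Fin 2, X (k, i) (k, j)

/-- The trace distance `T(A,B) = (1/2) tr √((A-B)ᴴ (A-B))`, where the square
root is the positive semidefinite square root. -/
def traceDist (A B : Matrix (Fin 2) (Fin 2) ℂ) : ℝ :=
  (1/2) * ((((Matrix.posSemidef_conjTranspose_mul_self (A - B)).1.eigenvectorUnitary.1 *
    diagonal (((↑) : ℝ → ℂ) ∘ (Real.sqrt ·) ∘ (Matrix.posSemidef_conjTranspose_mul_self (A - B)).1.eigenvalues) *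
    (star (Matrix.posSemidef_conjTranspose_mul_self (A - B)).1.eigenvectorUnitary :
      Matrix (Fin 2) (Fin 2) ℂ))).trace).re

/-!
Writing `ψ_{β,γ}` in the computational basis removes the square roots: `ρ_{β,γ}` is
`(β² + γ²)⁻¹` times the projector onto `β|++⟩ + γ|−−⟩`, and a nonzero real factor of the state
cancels in the ratio `P₊`. Since `σx|+⟩ = |+⟩` and `σx|−⟩ = −|−⟩`, Alice's flip sends
`ψ_{β,γ}` to `ψ_{β,−γ}`, so `P₋` at `(β, γ)` is `P₊` at `(β, −γ)`. A direct computation gives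
`P₊(Π_y) = 1/2 − 2βγ sin α / ((β² + γ²)(1 + sin² α))`, and `−3 + cos 2α = −2 (1 + sin² α)`.
-/

lemma conj_vecMulVec_star {m n R : Type*} [Fintype m] [CommRing R] [StarRing R]
    (M : Matrix n m R) (u : m → R) :
    M * vecMulVec u (star u) * Mᴴ = vecMulVec (M *ᵥ u) (star (M *ᵥ u)) := by
  rw [mul_vecMulVec, vecMulVec_mul, star_mulVec]

lemma σx_kron_one_mulVec_ψpure (β γ : ℝ) :
    (σx ⊗ₖ (1 : Matrix (Fin 2) (Fin 2) ℂ)) *ᵥ ψpure β γ = ψpure β (-γ) := by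
  ext q
  fin_cases q <;>
    simp [mulVec, dotProduct, Fintype.sum_prod_type, σx, ψpure, ketPlus, ketMinus, one_apply]

lemma σx_kron_one_conj_ρpure (β γ : ℝ) :
    (σx ⊗ₖ (1 : Matrix (Fin 2) (Fin 2) ℂ)) * ρpure β γ * (σx ⊗ₖ 1)ᴴ = ρpure β (-γ) :=
  (conj_vecMulVec_star _ (ψpure β γ)).trans (by rw [σx_kron_one_mulVec_ψpure]; rfl)

lemma postMinus_eq_postPlus_conj (α : ℝ) (ρ : Matrix (Fin 2 × Fin 2) (Fin 2 × Fin 2) ℂ) :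
    postMinus α ρ = postPlus α ((σx ⊗ₖ (1 : Matrix (Fin 2) (Fin 2) ℂ)) * ρ * (σx ⊗ₖ 1)ᴴ) := by
  have h : (Upt α * Aneg) ⊗ₖ (1 : Matrix (Fin 2) (Fin 2) ℂ) =
      ((Upt α * Apos) ⊗ₖ 1) * (σx ⊗ₖ 1) := by
    rw [Apos, Aneg, mul_one, ← mul_kronecker_mul, mul_one]
  rw [postMinus, postPlus, h, conjTranspose_mul]
  simp only [Matrix.mul_assoc]

lemma Pminus_ρpure_eq_Pplus_neg (α β γ : ℝ) (P : Matrix (Fin 2) (Fin 2) ℂ) :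
    Pminus α (ρpure β γ) P = Pplus α (ρpure β (-γ)) P := by
  rw [Pminus, Pplus, postMinus_eq_postPlus_conj, σx_kron_one_conj_ρpure]

lemma postPlus_smul (α : ℝ) (c : ℂ) (ρ : Matrix (Fin 2 × Fin 2) (Fin 2 × Fin 2) ℂ) :
    postPlus α (c • ρ) = c • postPlus α ρ := by
  rw [postPlus, postPlus, Matrix.mul_smul, Matrix.smul_mul]

lemma Pplus_ofReal_smul (α : ℝ) {c : ℝ} (hc : c ≠ 0)
    (ρ : Matrix (Fin 2 × Fin 2) (Fin 2 × Fin 2) ℂ) (P : Matrix (Fin 2) (Fin 2) ℂ) :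
    Pplus α ((c : ℂ) • ρ) P = Pplus α ρ P := by
  rw [Pplus, Pplus, postPlus_smul, Matrix.mul_smul, trace_smul, trace_smul, smul_eq_mul,
    smul_eq_mul, re_ofReal_mul, re_ofReal_mul, mul_div_mul_left _ _ hc]

/-- `β|++⟩ + γ|−−⟩` in the computational basis. -/
def ψunnorm (β γ : ℝ) : Fin 2 × Fin 2 → ℂ := fun q =>
  !![((β : ℂ) + γ) / 2, ((β : ℂ) - γ) / 2; ((β : ℂ) - γ) / 2, ((β : ℂ) + γ) / 2] q.1 q.2

lemma ψpure_eq_div (β γ : ℝ) :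
    ψpure β γ = fun q => ψunnorm β γ q / ((Real.sqrt (β ^ 2 + γ ^ 2) : ℝ) : ℂ) := by
  have h2 : ((Real.sqrt 2 : ℝ) : ℂ)⁻¹ * ((Real.sqrt 2 : ℝ) : ℂ)⁻¹ = (2 : ℂ)⁻¹ := by
    rw [← mul_inv, ← ofReal_mul, Real.mul_self_sqrt zero_le_two, ofReal_ofNat]
  funext q
  fin_cases q <;> simp [ψpure, ketPlus, ketMinus, ψunnorm] <;> rw [h2] <;> ring

lemma ρpure_eq_smul (β γ : ℝ) :
    ρpure β γ =
      (((β ^ 2 + γ ^ 2)⁻¹ : ℝ) : ℂ) • vecMulVec (ψunnorm β γ) (star (ψunnorm β γ)) := by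
  have hs : ((Real.sqrt (β ^ 2 + γ ^ 2) : ℝ) : ℂ) * ((Real.sqrt (β ^ 2 + γ ^ 2) : ℝ) : ℂ) =
      ((β ^ 2 + γ ^ 2 : ℝ) : ℂ) := by
    rw [← ofReal_mul, Real.mul_self_sqrt (by positivity)]
  ext q q'
  simp only [ρpure, vecMulVec_apply, ψpure_eq_div, Matrix.smul_apply, smul_eq_mul, map_div₀,
    conj_ofReal, Pi.star_apply, RCLike.star_def, ofReal_inv]
  rw [div_mul_div_comm, hs, div_eq_inv_mul]

lemma trace_postPlus_ψunnorm (α β γ : ℝ) :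
    (postPlus α (vecMulVec (ψunnorm β γ) (star (ψunnorm β γ)))).trace =
      (((β ^ 2 + γ ^ 2) * (1 + Real.sin α ^ 2) : ℝ) : ℂ) := by
  simp [postPlus, Matrix.trace, Matrix.mul_apply, Fintype.sum_prod_type, Upt, Apos, ψunnorm,
    vecMulVec_apply, conjTranspose_apply, one_apply, map_ofNat, -ofReal_sin]
  ring_nf
  rw [I_sq]
  ring

lemma trace_Piy_postPlus_ψunnorm (α β γ : ℝ) :
    ((1 ⊗ₖ Piy) * postPlus α (vecMulVec (ψunnorm β γ) (star (ψunnorm β γ)))).trace =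
      (((β ^ 2 + γ ^ 2) / 2 * (1 + Real.sin α ^ 2) - 2 * β * γ * Real.sin α : ℝ) : ℂ) := by
  simp [postPlus, Piy, Matrix.trace, Matrix.mul_apply, Fintype.sum_prod_type, Upt, Apos,
    ψunnorm, vecMulVec_apply, conjTranspose_apply, one_apply, map_ofNat, -ofReal_sin]
  ring_nf
  rw [I_sq]
  ring

lemma Pplus_ρpure_Piy (α : ℝ) {β γ : ℝ} (hβγ : β ^ 2 + γ ^ 2 ≠ 0) :
    Pplus α (ρpure β γ) Piy =
      1 / 2 - 2 * β * γ * Real.sin α / ((β ^ 2 + γ ^ 2) * (1 + Real.sin α ^ 2)) := by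
  have hs : 1 + Real.sin α ^ 2 ≠ 0 := by positivity
  rw [ρpure_eq_smul, Pplus_ofReal_smul α (inv_ne_zero hβγ), Pplus, trace_postPlus_ψunnorm,
    trace_Piy_postPlus_ψunnorm, ofReal_re, ofReal_re]
  field_simp

lemma neg_three_add_cos_two_mul (α : ℝ) :
    -3 + Real.cos (2 * α) = -2 * (1 + Real.sin α ^ 2) := by
  rw [Real.cos_two_mul, Real.cos_sq']
  ring

theorem stmt4_general (α β γ : ℝ) (hβγ : β^2 + γ^2 ≠ 0) :
    Pplus α (ρpure β γ) Piy - Pminus α (ρpure β γ) Piy =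
      8 * β * γ * Real.sin α / ((β^2 + γ^2) * (-3 + Real.cos (2*α))) ∧
    (Pplus α (ρpure β γ) Piy - Pminus α (ρpure β γ) Piy = 0 ↔
      β * γ * Real.sin α = 0) := by
  have hs : 0 < 1 + Real.sin α ^ 2 := by positivity
  have hden : (β ^ 2 + γ ^ 2) * (-3 + Real.cos (2 * α)) ≠ 0 := by
    rw [neg_three_add_cos_two_mul]
    exact mul_ne_zero hβγ (by linarith)
  have hdiff : Pplus α (ρpure β γ) Piy - Pminus α (ρpure β γ) Piy =
      8 * β * γ * Real.sin α / ((β ^ 2 + γ ^ 2) * (-3 + Real.cos (2 * α))) := by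
    rw [Pminus_ρpure_eq_Pplus_neg, Pplus_ρpure_Piy α hβγ,
      Pplus_ρpure_Piy α (by rwa [neg_sq]), neg_sq, neg_three_add_cos_two_mul]
    field_simp
    ring
  refine ⟨hdiff, ?_⟩
  rw [hdiff, div_eq_zero_iff, or_iff_left hden]
  constructor <;> intro h <;> linarith

/-- For the shared pure state `ρ_{β,γ}`, Bob's `σy` outcome probabilities satisfy
`P₊(Π_y) − P₋(Π_y) = 8βγ sin α / ((β²+γ²)(−3 + cos 2α))`; in particular the
difference vanishes exactly when `βγ sin α = 0`. -/
theorem stmt4 (α β γ : ℝ) (hβγ : β^2 + γ^2 ≠ 0)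
    (hplus : ((postPlus α (ρpure β γ)).trace).re ≠ 0)
    (hminus : ((postMinus α (ρpure β γ)).trace).re ≠ 0) :
    Pplus α (ρpure β γ) Piy - Pminus α (ρpure β γ) Piy =
      8 * β * γ * Real.sin α / ((β^2 + γ^2) * (-3 + Real.cos (2*α))) ∧
    (Pplus α (ρpure β γ) Piy - Pminus α (ρpure β γ) Piy = 0 ↔
      β * γ * Real.sin α = 0) :=
  stmt4_general α β γ hβγ
end
end
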